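/- For g ≥ 0, the number of quadruples (a,b,c,d) of non-negative integers satisfying a+b+d > 0, g+1 = a+b+2c+2d, and the constraint (b+d > 0 ⟹ c = 0), equals ⌊(g+4)/2⌋·⌊(g+5)/2⌋ − 2. -/

import Mathlib

/-!
A quadruple with `c > 0` has `b = d = 0`, so it is `(g + 1 - 2c, 0, c, 0)` with `1 ≤ c ≤ g / 2`.
A quadruple with `c = 0` is a solution of `a + b + 2d = g + 1`, and the solutions of
`a + b + 2d = n` number `⌊(n + 2)/2⌋ ⌊(n + 3)/2⌋`: splitting off those with `d = 0`
gives the recursion `T(n + 2) = T(n) + (n + 3)`.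
-/

open Finset

def triplesOfWeight (n : ℕ) : Set (ℕ × ℕ × ℕ) := {x | x.1 + x.2.1 + 2 * x.2.2 = n}

theorem triplesOfWeight_finite (n : ℕ) : (triplesOfWeight n).Finite :=
  (Set.finite_Iic (n, n, n)).subset fun x hx => by
    simp only [triplesOfWeight, Set.mem_ofPred_eq] at hx
    simp only [Set.mem_Iic, Prod.le_def]
    omega

def embedAntidiagonal (n : ℕ) : Set (ℕ × ℕ × ℕ) :=
  (fun p : ℕ × ℕ => (p.1, p.2, 0)) '' ↑(antidiagonal n)

theorem embedAntidiagonal_finite (n : ℕ) : (embedAntidiagonal n).Finite :=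
  (finite_toSet _).image _

theorem ncard_embedAntidiagonal (n : ℕ) : (embedAntidiagonal n).ncard = n + 1 := by
  rw [embedAntidiagonal, Set.ncard_image_of_injective _ fun p q h => by simp_all [Prod.ext_iff],
    Set.ncard_coe_finset, Nat.card_antidiagonal]

theorem triplesOfWeight_of_lt_two {n : ℕ} (hn : n < 2) :
    triplesOfWeight n = embedAntidiagonal n := by
  ext ⟨a, b, d⟩
  simp only [triplesOfWeight, embedAntidiagonal, Set.mem_ofPred_eq, Set.mem_image, mem_coe,
    HasAntidiagonal.mem_antidiagonal, Prod.mk.injEq, Prod.exists]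
  constructor
  · intro h
    exact ⟨a, b, by omega, rfl, rfl, by omega⟩
  · rintro ⟨a, b, h, rfl, rfl, rfl⟩
    omega

theorem triplesOfWeight_add_two (n : ℕ) :
    triplesOfWeight (n + 2) =
      embedAntidiagonal (n + 2) ∪ (fun x => (x.1, x.2.1, x.2.2 + 1)) '' triplesOfWeight n := by
  ext ⟨a, b, d⟩
  simp only [triplesOfWeight, embedAntidiagonal, Set.mem_union, Set.mem_ofPred_eq, Set.mem_image,
    mem_coe, HasAntidiagonal.mem_antidiagonal, Prod.mk.injEq, Prod.exists]
  constructor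
  · intro h
    rcases d with _ | d
    · exact Or.inl ⟨a, b, by omega, rfl, rfl, rfl⟩
    · exact Or.inr ⟨a, b, d, by omega, rfl, rfl, rfl⟩
  · rintro (⟨a, b, h, rfl, rfl, rfl⟩ | ⟨a, b, d, h, rfl, rfl, rfl⟩) <;> omega

theorem ncard_triplesOfWeight_add_two (n : ℕ) :
    (triplesOfWeight (n + 2)).ncard = (triplesOfWeight n).ncard + (n + 3) := by
  have hdisj : Disjoint (embedAntidiagonal (n + 2))
      ((fun x => (x.1, x.2.1, x.2.2 + 1)) '' triplesOfWeight n) := by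
    rw [Set.disjoint_left]
    rintro _ ⟨p, -, rfl⟩ ⟨x, -, hx⟩
    simp only [Prod.mk.injEq] at hx
    omega
  rw [triplesOfWeight_add_two, Set.ncard_union_eq hdisj (embedAntidiagonal_finite _)
      ((triplesOfWeight_finite n).image _), ncard_embedAntidiagonal,
    Set.ncard_image_of_injective _ fun x y h => by simp_all [Prod.ext_iff], add_comm]

theorem ncard_triplesOfWeight (n : ℕ) :
    (triplesOfWeight n).ncard = (n + 2) / 2 * ((n + 3) / 2) := by
  induction n using Nat.twoStepInduction with
  | zero => rw [triplesOfWeight_of_lt_two (by norm_num), ncard_embedAntidiagonal]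
  | one => rw [triplesOfWeight_of_lt_two (by norm_num), ncard_embedAntidiagonal]
  | more n ih _ =>
    rw [ncard_triplesOfWeight_add_two, ih]
    have h2 : (n + 2 + 2) / 2 = (n + 2) / 2 + 1 := by omega
    have h3 : (n + 2 + 3) / 2 = (n + 3) / 2 + 1 := by omega
    have hsum : (n + 2) / 2 + (n + 3) / 2 = n + 2 := by omega
    rw [h2, h3]
    linear_combination hsum.symm

def schottkyQuadruples (g : ℕ) : Set (ℕ × ℕ × ℕ × ℕ) :=
  {x | 0 < x.1 + x.2.1 + x.2.2.2 ∧ g + 1 = x.1 + x.2.1 + 2 * x.2.2.1 + 2 * x.2.2.2 ∧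
    (0 < x.2.1 + x.2.2.2 → x.2.2.1 = 0)}

theorem schottkyQuadruples_eq_union (g : ℕ) :
    schottkyQuadruples g = (fun c => (g + 1 - 2 * c, 0, c, 0)) '' ↑(Icc 1 (g / 2)) ∪
      (fun x => (x.1, x.2.1, 0, x.2.2)) '' triplesOfWeight (g + 1) := by
  ext ⟨a, b, c, d⟩
  simp only [schottkyQuadruples, triplesOfWeight, Set.mem_union, Set.mem_ofPred_eq, Set.mem_image,
    mem_coe, mem_Icc, Prod.mk.injEq, Prod.exists]
  constructor
  · rintro ⟨hpos, hsum, hcoupled⟩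
    rcases Nat.eq_zero_or_pos c with rfl | hc_pos
    · exact Or.inr ⟨a, b, d, by omega, rfl, rfl, rfl, rfl⟩
    · have hbd : b = 0 ∧ d = 0 := by omega
      exact Or.inl ⟨c, by omega, by omega, hbd.1.symm, rfl, hbd.2.symm⟩
  · rintro (⟨c, hc, rfl, rfl, rfl, rfl⟩ | ⟨a, b, d, h, rfl, rfl, rfl, rfl⟩) <;> omega

theorem ncard_schottkyQuadruples (g : ℕ) :
    (schottkyQuadruples g).ncard = g / 2 + (g + 3) / 2 * ((g + 4) / 2) := by
  have hdisj : Disjoint ((fun c => (g + 1 - 2 * c, 0, c, 0)) '' ↑(Icc 1 (g / 2)))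
      ((fun x => (x.1, x.2.1, 0, x.2.2)) '' triplesOfWeight (g + 1)) := by
    rw [Set.disjoint_left]
    rintro _ ⟨c, hc, rfl⟩ ⟨x, -, hx⟩
    simp only [mem_coe, mem_Icc, Prod.mk.injEq] at hc hx
    omega
  rw [schottkyQuadruples_eq_union, Set.ncard_union_eq hdisj ((finite_toSet _).image _)
      ((triplesOfWeight_finite _).image _),
    Set.ncard_image_of_injective _ fun c c' h => by simp_all [Prod.ext_iff],
    Set.ncard_image_of_injective _ fun x y h => by simp_all [Prod.ext_iff],
    Set.ncard_coe_finset, Nat.card_Icc, ncard_triplesOfWeight, Nat.add_sub_cancel]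

/-- For `g ≥ 0`, the number of quadruples `(a,b,c,d)` of non-negative integers
with `a+b+d > 0`, `g+1 = a+b+2c+2d`, and `(b+d > 0 → c = 0)`, equals
`⌊(g+4)/2⌋·⌊(g+5)/2⌋ − 2`. -/
theorem stmt_4 (g : ℕ) :
    Set.ncard {x : ℕ × ℕ × ℕ × ℕ |
        0 < x.1 + x.2.1 + x.2.2.2 ∧
        g + 1 = x.1 + x.2.1 + 2 * x.2.2.1 + 2 * x.2.2.2 ∧
        (0 < x.2.1 + x.2.2.2 → x.2.2.1 = 0)} =
      (g + 4) / 2 * ((g + 5) / 2) - 2 := by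
  show (schottkyQuadruples g).ncard = _
  rw [ncard_schottkyQuadruples, show (g + 5) / 2 = (g + 3) / 2 + 1 by omega,
    mul_add_one, Nat.mul_comm ((g + 4) / 2)]
  omega
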